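/- arXiv:2208.08588 — 7 statements merged into one kernel-verified Lean document; each statement's English description precedes it below -/
import Mathlib

section
/- Let $I_1$ and $I_2$ be monomial ideals in a polynomial ring generated by monomials in disjoint sets of variables. Then for all $n\ge 1$, $\overline{(I_1 I_2)^n} = \overline{I_1^n}\,\overline{I_2^n}$. -/
open MvPolynomial

/-- The monomial `t^a` in `K[t_1,…,t_s]`. -/
noncomputable def mono (K : Type*) [Field K] {s : ℕ} (a : Fin s → ℕ) :
    MvPolynomial (Fin s) K :=
  MvPolynomial.monomial (Finsupp.equivFunOnFinite.symm a) 1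

/-- The monomial ideal generated by the monomials `t^{v i}`. -/
noncomputable def monIdeal (K : Type*) [Field K] {s q : ℕ} (v : Fin q → Fin s → ℕ) :
    Ideal (MvPolynomial (Fin s) K) :=
  Ideal.span (Set.range fun i => mono K (v i))

/-- The integral closure of a monomial ideal `J`: the ideal generated by the
monomials `t^a` such that `(t^a)^p ∈ J^p` for some `p ≥ 1`. -/
noncomputable def intCl {K : Type*} [Field K] {s : ℕ}
    (J : Ideal (MvPolynomial (Fin s) K)) : Ideal (MvPolynomial (Fin s) K) :=
  Ideal.span {m | (∃ a : Fin s → ℕ, m = mono K a) ∧ ∃ p : ℕ, 1 ≤ p ∧ m ^ p ∈ J ^ p}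

/-- A monomial ideal is normal if `I^n` is integrally closed for all `n ≥ 1`. -/
def IsNormalIdeal {K : Type*} [Field K] {s : ℕ}
    (I : Ideal (MvPolynomial (Fin s) K)) : Prop :=
  ∀ n : ℕ, 1 ≤ n → intCl (I ^ n) = I ^ n

section Aux

variable (K : Type*) [Field K] {s : ℕ}

lemma IC.equiv_symm_add (a b : Fin s → ℕ) :
    Finsupp.equivFunOnFinite.symm (a + b)
      = Finsupp.equivFunOnFinite.symm a + Finsupp.equivFunOnFinite.symm b := by
  ext k; simp

lemma IC.mono_mul (a b : Fin s → ℕ) : mono K a * mono K b = mono K (a + b) := by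
  unfold mono
  rw [monomial_mul, one_mul, IC.equiv_symm_add]

lemma IC.mono_pow (a : Fin s → ℕ) (p : ℕ) : mono K a ^ p = mono K (fun k => p * a k) := by
  unfold mono
  rw [monomial_pow, one_pow]
  have : p • Finsupp.equivFunOnFinite.symm a
      = Finsupp.equivFunOnFinite.symm (fun k => p * a k) := by
    ext k; simp
  rw [this]

/-- The ideal generated by the monomials with exponent vectors in `A`. -/
noncomputable def IC.MI (A : Set (Fin s → ℕ)) : Ideal (MvPolynomial (Fin s) K) :=
  Ideal.span (mono K '' A)

lemma IC.mem_MI (a : Fin s → ℕ) (A : Set (Fin s → ℕ)) :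
    mono K a ∈ IC.MI K A ↔ ∃ d ∈ A, ∀ k, d k ≤ a k := by
  classical
  have himg : mono K '' A
      = (fun d => monomial d (1 : K)) '' (Finsupp.equivFunOnFinite.symm '' A) := by
    rw [Set.image_image]; rfl
  rw [IC.MI, himg, mem_ideal_span_monomial_image]
  have hsupp : (mono K a).support = {Finsupp.equivFunOnFinite.symm a} := by
    rw [mono, support_monomial, if_neg one_ne_zero]
  rw [hsupp]
  simp only [Finset.mem_singleton, forall_eq, Set.mem_image]
  constructor
  · rintro ⟨si, ⟨d, hd, rfl⟩, hle⟩
    exact ⟨d, hd, fun k => hle k⟩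
  · rintro ⟨d, hd, hle⟩
    exact ⟨Finsupp.equivFunOnFinite.symm d, ⟨d, hd, rfl⟩, fun k => hle k⟩

lemma IC.MI_mul (A B : Set (Fin s → ℕ)) :
    IC.MI K A * IC.MI K B = IC.MI K (Set.image2 (· + ·) A B) := by
  rw [IC.MI, IC.MI, IC.MI, Ideal.span_mul_span']
  congr 1
  rw [← Set.image2_mul, Set.image2_image_left, Set.image2_image_right]
  calc Set.image2 (fun a b => mono K a * mono K b) A B
      = Set.image2 (fun a b => mono K (a + b)) A B :=
        Set.image2_congr fun a _ b _ => IC.mono_mul K a b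
    _ = mono K '' Set.image2 (· + ·) A B := by
        rw [Set.image_image2]

/-- The set of `m`-fold sums of elements of `A`. -/
def IC.sumsOf (A : Set (Fin s → ℕ)) : ℕ → Set (Fin s → ℕ)
  | 0 => {0}
  | m + 1 => Set.image2 (· + ·) (IC.sumsOf A m) A

lemma IC.MI_pow (A : Set (Fin s → ℕ)) (m : ℕ) :
    IC.MI K A ^ m = IC.MI K (IC.sumsOf A m) := by
  induction m with
  | zero =>
      have h0 : Finsupp.equivFunOnFinite.symm (0 : Fin s → ℕ) = 0 := by ext k; simp
      have : mono K '' ({0} : Set (Fin s → ℕ)) = {1} := by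
        rw [Set.image_singleton]
        congr 1
        rw [mono, h0, monomial_zero', C_1]
      rw [pow_zero, IC.sumsOf, IC.MI, this, Ideal.span_singleton_one, Ideal.one_eq_top]
  | succ m ih =>
      rw [pow_succ, ih, IC.MI_mul, IC.sumsOf]

lemma IC.monIdeal_eq {q : ℕ} (v : Fin q → Fin s → ℕ) :
    monIdeal K v = IC.MI K (Set.range v) := by
  rw [monIdeal, IC.MI, ← Set.range_comp]
  rfl

lemma IC.sumsOf_apply_eq_zero {q : ℕ} {v : Fin q → Fin s → ℕ} {m : ℕ} {u : Fin s → ℕ}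
    (hu : u ∈ IC.sumsOf (Set.range v) m) {k : Fin s} (h : ∀ i, v i k = 0) : u k = 0 := by
  induction m generalizing u with
  | zero => simp [IC.sumsOf] at hu; simp [hu]
  | succ m ih =>
      rw [IC.sumsOf] at hu
      obtain ⟨u1, hu1, d, ⟨i, rfl⟩, rfl⟩ := hu
      simp [ih hu1, h i]

end Aux

theorem intCl_pow_mul_of_disjoint_vars
    (K : Type*) [Field K] {s q₁ q₂ : ℕ}
    (v : Fin q₁ → Fin s → ℕ) (w : Fin q₂ → Fin s → ℕ)
    (hdisj : ∀ k : Fin s, (∀ i, v i k = 0) ∨ (∀ j, w j k = 0)) :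
    ∀ n : ℕ, 1 ≤ n →
      intCl ((monIdeal K v * monIdeal K w) ^ n) =
        intCl ((monIdeal K v) ^ n) * intCl ((monIdeal K w) ^ n) := by
  classical
  intro n _
  apply le_antisymm
  · -- hard direction
    rw [intCl, Ideal.span_le]
    rintro m ⟨⟨a, rfl⟩, p, hp, hpow⟩
    have hrw : ((monIdeal K v * monIdeal K w) ^ n) ^ p = monIdeal K v ^ (n * p) * monIdeal K w ^ (n * p) := by
      rw [← pow_mul, mul_pow]
    rw [hrw, IC.monIdeal_eq, IC.monIdeal_eq, IC.MI_pow, IC.MI_pow, IC.MI_mul,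
      IC.mono_pow, IC.mem_MI] at hpow
    obtain ⟨d, hd, hle⟩ := hpow
    obtain ⟨u, hu, e, he, rfl⟩ := hd
    -- split a into the part on v-variables and the rest
    set a₁ : Fin s → ℕ := fun k => if ∀ i, v i k = 0 then 0 else a k with ha₁
    set a₂ : Fin s → ℕ := fun k => if ∀ i, v i k = 0 then a k else 0 with ha₂
    have hsum : a₁ + a₂ = a := by
      funext k
      by_cases h : ∀ i, v i k = 0 <;> simp [ha₁, ha₂, h]
    have h₁ : mono K a₁ ∈ intCl (monIdeal K v ^ n) := by
      apply Ideal.subset_span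
      refine ⟨⟨a₁, rfl⟩, p, hp, ?_⟩
      rw [← pow_mul, IC.monIdeal_eq, IC.MI_pow, IC.mono_pow, IC.mem_MI]
      refine ⟨u, hu, fun k => ?_⟩
      by_cases h : ∀ i, v i k = 0
      · rw [IC.sumsOf_apply_eq_zero hu h]; exact Nat.zero_le _
      · have : a₁ k = a k := by simp [ha₁, h]
        rw [this]
        calc u k ≤ u k + e k := Nat.le_add_right _ _
          _ ≤ p * a k := hle k
    have h₂ : mono K a₂ ∈ intCl (monIdeal K w ^ n) := by
      apply Ideal.subset_span
      refine ⟨⟨a₂, rfl⟩, p, hp, ?_⟩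
      rw [← pow_mul, IC.monIdeal_eq, IC.MI_pow, IC.mono_pow, IC.mem_MI]
      refine ⟨e, he, fun k => ?_⟩
      by_cases h : ∀ i, v i k = 0
      · have : a₂ k = a k := by simp [ha₂, h]
        rw [this]
        calc e k ≤ u k + e k := Nat.le_add_left _ _
          _ ≤ p * a k := hle k
      · have hw : ∀ j, w j k = 0 := (hdisj k).resolve_left h
        rw [IC.sumsOf_apply_eq_zero he hw]; exact Nat.zero_le _
    have : mono K a = mono K a₁ * mono K a₂ := by rw [IC.mono_mul, hsum]
    rw [this]
    exact Ideal.mul_mem_mul h₁ h₂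
  · -- easy direction
    rw [intCl, intCl, Ideal.span_mul_span']
    rw [intCl, Ideal.span_le]
    rintro z hz
    obtain ⟨x, hx, y, hy, rfl⟩ := hz
    obtain ⟨⟨a₁, rfl⟩, p₁, hp₁, h₁⟩ := hx
    obtain ⟨⟨a₂, rfl⟩, p₂, hp₂, h₂⟩ := hy
    apply Ideal.subset_span
    refine ⟨⟨a₁ + a₂, by exact IC.mono_mul K a₁ a₂⟩, p₁ * p₂, ?_, ?_⟩
    · exact Nat.one_le_iff_ne_zero.mpr (Nat.mul_ne_zero (Nat.one_le_iff_ne_zero.mp hp₁)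
        (Nat.one_le_iff_ne_zero.mp hp₂))
    · have hx' : mono K a₁ ^ (p₁ * p₂) ∈ (monIdeal K v ^ n) ^ (p₁ * p₂) := by
        rw [pow_mul, pow_mul]
        exact Ideal.pow_mem_pow h₁ p₂
      have hy' : mono K a₂ ^ (p₁ * p₂) ∈ (monIdeal K w ^ n) ^ (p₁ * p₂) := by
        rw [mul_comm p₁ p₂, pow_mul, pow_mul]
        exact Ideal.pow_mem_pow h₂ p₁
      have hrw : ((monIdeal K v * monIdeal K w) ^ n) ^ (p₁ * p₂)
          = (monIdeal K v ^ n) ^ (p₁ * p₂) * (monIdeal K w ^ n) ^ (p₁ * p₂) := by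
        rw [mul_pow, mul_pow]
      rw [hrw, mul_pow]
      exact Ideal.mul_mem_mul hx' hy'
end

section
/- Let $I=(t^{v_1},\dots,t^{v_q})$ be a monomial ideal of $S=K[t_1,\dots,t_s]$ and let $\mathcal{A}' = \{e_1,\dots,e_s\}\cup\{(v_1,1),\dots,(v_q,1)\}\subset\mathbb{R}^{s+1}$. Then $I$ is normal if and only if $\mathbb{R}_+\mathcal{A}'\cap\mathbb{Z}^{s+1} = \mathbb{N}\mathcal{A}'$, i.e., $\mathcal{A}'$ is a Hilbert basis. -/
open MvPolynomial

/-- The vectors of the set `𝒜' = {e_1,…,e_s} ∪ {(v_1,1),…,(v_q,1)}` in `ℤ^{s+1}`. -/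
def reesGens {s q : ℕ} (v : Fin q → Fin s → ℕ) : (Fin s ⊕ Fin q) → Fin (s + 1) → ℤ :=
  Sum.elim
    (fun i k => if (k : ℕ) = (i : ℕ) then 1 else 0)
    (fun j k => if h : (k : ℕ) < s then (v j ⟨k, h⟩ : ℤ) else 1)

/-!
If `x = (a, n)` lies in `ℝ₊𝒜'`, Carathéodory's theorem writes it over linearly independent
generators, whose coefficients are then rational; clearing denominators gives `p • x ∈ ℕ𝒜'`.
In exponent language, `x ∈ ℕ𝒜'` says `t^a ∈ I^n` and `p • x ∈ ℕ𝒜'` says `(t^a)^p ∈ (I^n)^p`,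
so the Hilbert basis property says exactly that every monomial integral over `I^n` lies in `I^n`;
since `I^n` and its integral closure are monomial ideals, this is normality.
-/

open Finset

section Caratheodory

variable {𝕜 V ι : Type*} [Field 𝕜] [LinearOrder 𝕜] [IsStrictOrderedRing 𝕜]
  [AddCommGroup V] [Module 𝕜 V] [Fintype ι]

lemma exists_nonneg_sum_smul_eq_card_support_lt (w : ι → V) {μ : ι → 𝕜} (hμ : 0 ≤ μ)
    (hdep : ¬LinearIndepOn 𝕜 w ({j | μ j ≠ 0} : Finset ι)) :
    ∃ ν : ι → 𝕜, 0 ≤ ν ∧ ∑ j, ν j • w j = ∑ j, μ j • w j ∧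
      #{j | ν j ≠ 0} < #{j | μ j ≠ 0} := by
  obtain ⟨d, hd, hdμ, i, hdi⟩ : ∃ d : ι → 𝕜, ∑ j, d j • w j = 0 ∧
      (∀ j, μ j = 0 → d j = 0) ∧ ∃ i, 0 < d i := by
    obtain ⟨g, hg, i, hi, hgi⟩ := not_linearIndepOn_finset_iff.mp hdep
    set g' : ι → 𝕜 := fun j => if μ j ≠ 0 then g j else 0
    have hg' : ∑ j, g' j • w j = 0 := by simpa [g', ite_smul, Finset.sum_ite] using hg
    have hg'μ : ∀ j, μ j = 0 → g' j = 0 := by simp +contextual [g']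
    have hg'i : g' i = g i := by simp_all [g']
    rcases hgi.lt_or_gt with hneg | hpos
    · exact ⟨-g', by simp [hg'], by simpa using hg'μ, i, by simpa [hg'i] using hneg⟩
    · exact ⟨g', hg', hg'μ, i, hg'i ▸ hpos⟩
  -- Move along `-d` until the first coefficient of `μ` hits zero.
  obtain ⟨m, hm, hmin⟩ := exists_min_image {j | 0 < d j} (fun j => μ j / d j) ⟨i, by simpa⟩
  rw [mem_filter_univ] at hm
  set t := μ m / d m
  have ht : 0 ≤ t := div_nonneg (hμ m) hm.le
  refine ⟨μ - t • d, fun j => ?_, ?_, card_lt_card ?_⟩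
  · rcases le_or_gt (d j) 0 with hdj | hdj
    · simpa using le_trans (mul_nonpos_of_nonneg_of_nonpos ht hdj) (hμ j)
    · have := hmin j (by simpa)
      simpa using (le_div_iff₀ hdj).mp this
  · simp [sub_smul, sum_sub_distrib, mul_smul, ← smul_sum, hd]
  · refine (ssubset_iff_of_subset ?_).mpr ⟨m, ?_, ?_⟩
    · intro j
      simp only [mem_filter_univ, Pi.sub_apply, Pi.smul_apply, smul_eq_mul]
      intro hj hμj
      simp [hμj, hdμ j hμj] at hj
    · simp only [mem_filter_univ]
      rintro hμm
      simp [hdμ m hμm] at hm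
    · simp [t, hm.ne']

theorem exists_nonneg_sum_smul_eq_linearIndepOn (w : ι → V) {μ : ι → 𝕜} (hμ : 0 ≤ μ) :
    ∃ ν : ι → 𝕜, 0 ≤ ν ∧ ∑ j, ν j • w j = ∑ j, μ j • w j ∧
      LinearIndepOn 𝕜 w ({j | ν j ≠ 0} : Finset ι) := by
  induction hN : #{j | μ j ≠ 0} using Nat.strong_induction_on generalizing μ with
  | _ N ih =>
  by_cases hind : LinearIndepOn 𝕜 w ({j | μ j ≠ 0} : Finset ι)
  · exact ⟨μ, hμ, rfl, hind⟩
  obtain ⟨ν, hν, hνμ, hlt⟩ := exists_nonneg_sum_smul_eq_card_support_lt w hμ hind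
  obtain ⟨ν', hν', hν'ν, hind'⟩ := ih _ (hN ▸ hlt) hν rfl
  exact ⟨ν', hν', hν'ν.trans hνμ, hind'⟩

end Caratheodory

theorem exists_comp_eq_of_linearIndependent {K L ι κ : Type*} [Field K] [Field L]
    [Fintype ι] [Fintype κ] [DecidableEq κ] (f : K →+* L) {w : ι → κ → K} {x : κ → K}
    {ν : ι → L} (hw : LinearIndependent L fun j => f ∘ w j)
    (hx : ∑ j, ν j • (f ∘ w j) = f ∘ x) : ∃ r : ι → K, f ∘ r = ν := by
  have hmem : x ∈ Submodule.span K (Set.range w) := by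
    by_contra hx'
    obtain ⟨φ, hφx, hφspan⟩ := Submodule.exists_dual_map_eq_bot_of_notMem hx' inferInstance
    have hφw : ∀ j, φ (w j) = 0 := fun j =>
      LinearMap.le_ker_iff_map.mpr hφspan (Submodule.subset_span ⟨j, rfl⟩)
    set u : κ → K := fun i => φ fun k => if i = k then 1 else 0
    have hφ : ∀ y, f (φ y) = ∑ i, f (y i) * f (u i) := fun y => by
      simp [LinearMap.pi_apply_eq_sum_univ φ y, u]
    have hfx : ∀ i, f (x i) = ∑ j, ν j * f (w j i) := fun i => by
      simpa using (congrFun hx i).symm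
    apply hφx
    apply f.injective
    calc f (φ x) = ∑ i, (∑ j, ν j * f (w j i)) * f (u i) := by simp [hφ, hfx]
      _ = ∑ j, ν j * f (φ (w j)) := by
        simp only [hφ, sum_mul, mul_sum, mul_assoc]
        exact sum_comm
      _ = f 0 := by simp [hφw]
  obtain ⟨c, hc⟩ := (Submodule.mem_span_range_iff_exists_fun K).mp hmem
  refine ⟨c, funext fun j => Fintype.linearIndependent_iffₛ.mp hw _ _ ?_ j⟩
  rw [hx, ← hc]
  ext i
  simp [map_sum]

lemma Rat.exists_pos_nat_mul_eq_natCast {ι : Type*} [Fintype ι] (r : ι → ℚ) (hr : 0 ≤ r) :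
    ∃ p : ℕ, 0 < p ∧ ∃ c : ι → ℕ, ∀ j, (c j : ℚ) = p * r j := by
  refine ⟨∏ j, (r j).den, prod_pos fun j _ => (r j).den_pos, ?_⟩
  have hdvd : ∀ j, ∃ t, ∏ j, (r j).den = (r j).den * t := fun j =>
    dvd_prod_of_mem (fun j => (r j).den) (mem_univ j)
  choose t ht using hdvd
  refine ⟨fun j => t j * (r j).num.toNat, fun j => ?_⟩
  have hnum : ((r j).num.toNat : ℚ) = (r j).num :=
    mod_cast Int.toNat_of_nonneg (Rat.num_nonneg.mpr (hr j))
  rw [ht j, Nat.cast_mul, Nat.cast_mul, hnum, ← Rat.mul_den_eq_num]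
  ring

section Combinations

variable {ι κ : Type*} [Fintype ι]

def IsNonnegRealCombination (w : ι → κ → ℤ) (x : κ → ℤ) : Prop :=
  ∃ c : ι → ℝ, (∀ j, 0 ≤ c j) ∧ ∀ k, (x k : ℝ) = ∑ j, c j * (w j k : ℝ)

def IsNatCombination (w : ι → κ → ℤ) (x : κ → ℤ) : Prop :=
  ∃ c : ι → ℕ, ∀ k, x k = ∑ j, (c j : ℤ) * w j k

variable {w : ι → κ → ℤ} {x : κ → ℤ}

lemma IsNatCombination.isNonnegRealCombination (h : IsNatCombination w x) :
    IsNonnegRealCombination w x := by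
  obtain ⟨c, hc⟩ := h
  exact ⟨fun j => c j, fun j => by positivity, fun k => by simp [hc k]⟩

lemma IsNonnegRealCombination.nonneg (hw : ∀ j k, 0 ≤ w j k) (h : IsNonnegRealCombination w x) :
    0 ≤ x := by
  obtain ⟨c, hc, hx⟩ := h
  intro k
  have : (0 : ℝ) ≤ x k := hx k ▸ sum_nonneg fun j _ => mul_nonneg (hc j) (mod_cast hw j k)
  exact_mod_cast this

theorem IsNonnegRealCombination.exists_pos_isNatCombination_nsmul [Fintype κ] [DecidableEq κ]
    (h : IsNonnegRealCombination w x) : ∃ p : ℕ, 0 < p ∧ IsNatCombination w (p • x) := by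
  classical
  obtain ⟨μ, hμ, hx⟩ := h
  set W : ι → κ → ℝ := fun j k => w j k
  obtain ⟨ν, hν, hνμ, hind⟩ := exists_nonneg_sum_smul_eq_linearIndepOn W (μ := μ) hμ
  have hνx : ∀ k, ∑ j, ν j * (w j k : ℝ) = x k := fun k => by
    simpa [W, ← hx k] using congrFun hνμ k
  set S : Finset ι := {j | ν j ≠ 0}
  obtain ⟨r, hr⟩ := exists_comp_eq_of_linearIndependent (Rat.castHom ℝ)
    (w := fun (j : S) k => (w j k : ℚ)) (x := fun k => (x k : ℚ)) (ν := fun j => ν j) hind (by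
      ext k
      simp only [Finset.sum_apply, Pi.smul_apply, Function.comp_apply, eq_ratCast, Rat.cast_intCast,
        smul_eq_mul, ← hνx k]
      rw [sum_coe_sort S (fun j => ν j * (w j k : ℝ)), sum_filter_of_ne (by simp +contextual)])
  set r' : ι → ℚ := fun j => if h : j ∈ S then r ⟨j, h⟩ else 0
  have hr' : ∀ j, (r' j : ℝ) = ν j := fun j => by
    by_cases h : j ∈ S
    · simpa [r', h] using congrFun hr ⟨j, h⟩
    · simp_all [r', S]
  have hr'x : ∀ k, (x k : ℚ) = ∑ j, r' j * w j k := fun k => by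
    have : (x k : ℝ) = ∑ j, (r' j : ℝ) * w j k := by simp [hr', hνx]
    exact_mod_cast this
  obtain ⟨p, hp, c, hc⟩ := Rat.exists_pos_nat_mul_eq_natCast r' fun j => by
    have : (0 : ℝ) ≤ r' j := hr' j ▸ hν j
    exact_mod_cast this
  refine ⟨p, hp, c, fun k => ?_⟩
  have : ((p • x) k : ℚ) = ∑ j, (c j : ℚ) * w j k := by
    simp [hr'x k, hc, mul_sum, mul_assoc]
  exact_mod_cast this

end Combinations

def DominatesSum {s q : ℕ} (v : Fin q → Fin s → ℕ) (n : ℕ) (a : Fin s → ℕ) : Prop :=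
  ∃ c : Fin q → ℕ, ∑ j, c j = n ∧ ∑ j, c j • v j ≤ a

section MonomialIdeal

variable (K : Type*) [Field K] {s : ℕ}

lemma mono_eq (a : Fin s → ℕ) :
    mono K a = monomial ((Finsupp.linearEquivFunOnFinite ℕ ℕ (Fin s)).symm a) 1 := rfl

lemma mono_nsmul (p : ℕ) (a : Fin s → ℕ) : mono K (p • a) = mono K a ^ p := by
  rw [mono_eq, mono_eq, map_nsmul, monomial_pow, one_pow]

lemma mono_sum {ι : Type*} (t : Finset ι) (a : ι → Fin s → ℕ) :
    mono K (∑ j ∈ t, a j) = ∏ j ∈ t, mono K (a j) := by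
  simp [mono_eq, monomial_sum_one]

lemma mono_mem_span_image_mono_iff (E : Set (Fin s → ℕ)) (a : Fin s → ℕ) :
    mono K a ∈ Ideal.span (mono K '' E) ↔ ∃ e ∈ E, e ≤ a := by
  classical
  rw [show mono K '' E = (fun d => monomial d (1 : K)) '' (Finsupp.equivFunOnFinite.symm '' E)
    by rw [Set.image_image]; rfl, mem_ideal_span_monomial_image]
  simp [mono, support_monomial, Finsupp.le_def, Pi.le_def,
    Finsupp.equivFunOnFinite.exists_congr_left]

variable {q : ℕ} (v : Fin q → Fin s → ℕ)

lemma monIdeal_pow (n : ℕ) :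
    monIdeal K v ^ n =
      Ideal.span (mono K '' ((fun c : Fin q → ℕ => ∑ j, c j • v j) '' {c | ∑ j, c j = n})) := by
  rw [monIdeal, Ideal.span, Submodule.span_pow, ← Set.image_univ,
    Finsupp.image_pow_eq_finsuppProd_image]
  congr 1
  ext m
  simp only [Set.subset_univ, and_true, Set.mem_image, Set.mem_ofPred_eq, exists_exists_and_eq_and]
  constructor
  · rintro ⟨c, hc, rfl⟩
    refine ⟨c, by simpa [Finsupp.degree_eq_sum] using hc, ?_⟩
    rw [Finsupp.prod_fintype _ _ (by simp), mono_sum]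
    simp only [mono_nsmul]
  · rintro ⟨c, hc, rfl⟩
    refine ⟨Finsupp.equivFunOnFinite.symm c, by simpa [Finsupp.degree_eq_sum] using hc, ?_⟩
    rw [Finsupp.prod_fintype _ _ (by simp), mono_sum]
    simp only [mono_nsmul]; rfl

lemma mono_mem_monIdeal_pow_iff (n : ℕ) (a : Fin s → ℕ) :
    mono K a ∈ monIdeal K v ^ n ↔ DominatesSum v n a := by
  simp [monIdeal_pow, mono_mem_span_image_mono_iff, DominatesSum]

lemma mono_pow_mem_monIdeal_pow_pow_iff (n p : ℕ) (a : Fin s → ℕ) :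
    mono K a ^ p ∈ (monIdeal K v ^ n) ^ p ↔ DominatesSum v (n * p) (p • a) := by
  rw [← mono_nsmul, ← pow_mul, mono_mem_monIdeal_pow_iff]

lemma monIdeal_pow_le_intCl (n : ℕ) : monIdeal K v ^ n ≤ intCl (monIdeal K v ^ n) := by
  rw [monIdeal_pow, Ideal.span_le]
  rintro _ ⟨e, he, rfl⟩
  refine Ideal.subset_span ⟨⟨e, rfl⟩, 1, le_rfl, ?_⟩
  rw [pow_one, pow_one]
  exact Ideal.subset_span ⟨e, he, rfl⟩

lemma intCl_monIdeal_pow_le_iff (n : ℕ) :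
    intCl (monIdeal K v ^ n) ≤ monIdeal K v ^ n ↔
      ∀ p a, 1 ≤ p → DominatesSum v (n * p) (p • a) → DominatesSum v n a := by
  simp only [intCl, Ideal.span_le, Set.subset_def, Set.mem_ofPred_eq, SetLike.mem_coe]
  constructor
  · intro h p a hp hdom
    exact (mono_mem_monIdeal_pow_iff K v n a).mp
      (h _ ⟨⟨a, rfl⟩, p, hp, (mono_pow_mem_monIdeal_pow_pow_iff K v n p a).mpr hdom⟩)
  · rintro h _ ⟨⟨a, rfl⟩, p, hp, hmem⟩
    exact (mono_mem_monIdeal_pow_iff K v n a).mpr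
      (h p a hp ((mono_pow_mem_monIdeal_pow_pow_iff K v n p a).mp hmem))

theorem isNormalIdeal_monIdeal_iff :
    IsNormalIdeal (monIdeal K v) ↔
      ∀ n p a, 1 ≤ n → 1 ≤ p → DominatesSum v (n * p) (p • a) → DominatesSum v n a := by
  simp only [IsNormalIdeal, le_antisymm_iff, monIdeal_pow_le_intCl, and_true,
    intCl_monIdeal_pow_le_iff]
  exact ⟨fun h n p a hn => h n hn p a, fun h n hn p a => h n p a hn⟩

end MonomialIdeal

section ReesGenerators

variable {s q : ℕ} (v : Fin q → Fin s → ℕ)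

lemma reesGens_nonneg (j : Fin s ⊕ Fin q) (k : Fin (s + 1)) : 0 ≤ reesGens v j k := by
  rcases j with i | j <;> simp only [reesGens, Sum.elim_inl, Sum.elim_inr] <;> split <;> simp

variable {R : Type*} [Ring R]

lemma sum_mul_reesGens_last (f : Fin s ⊕ Fin q → R) :
    ∑ j, f j * (reesGens v j (Fin.last s) : R) = ∑ j, f (.inr j) := by
  simp [Fintype.sum_sum_type, reesGens, Fin.val_last, ne_of_gt]

lemma sum_mul_reesGens_castSucc (f : Fin s ⊕ Fin q → R) (i : Fin s) :
    ∑ j, f j * (reesGens v j i.castSucc : R) = f (.inl i) + ∑ j, f (.inr j) * v j i := by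
  simp [Fintype.sum_sum_type, reesGens, Fin.val_inj]

lemma isNatCombination_reesGens_iff {x : Fin (s + 1) → ℤ} {n : ℕ} {a : Fin s → ℕ}
    (hn : x (Fin.last s) = n) (ha : ∀ i, x i.castSucc = a i) :
    IsNatCombination (reesGens v) x ↔ DominatesSum v n a := by
  constructor
  · rintro ⟨c, hc⟩
    have hlast := sum_mul_reesGens_last v fun j => (c j : ℤ)
    have hcast := sum_mul_reesGens_castSucc v fun j => (c j : ℤ)
    simp only [Int.cast_id, ← hc, hn, ha] at hlast hcast
    refine ⟨fun j => c (.inr j), by exact_mod_cast hlast.symm, fun i => ?_⟩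
    have : ((∑ j, c (.inr j) • v j) i : ℤ) ≤ a i := by
      simp [hcast i]
    exact_mod_cast this
  · rintro ⟨c, hcn, hca⟩
    set c' : Fin s ⊕ Fin q → ℕ := Sum.elim (fun i => a i - (∑ j, c j • v j) i) c
    have hlast := sum_mul_reesGens_last v fun j => (c' j : ℤ)
    have hcast := sum_mul_reesGens_castSucc v fun j => (c' j : ℤ)
    simp only [Int.cast_id] at hlast hcast
    refine ⟨c', fun k => ?_⟩
    induction k using Fin.lastCases with
    | last =>
      rw [hn, hlast]
      simp [c', ← hcn]
    | cast i =>
      have hle : (∑ j, c j * v j i) ≤ a i := by simpa using hca i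
      rw [ha, hcast]
      simp [c', Nat.cast_sub hle]

lemma isNonnegRealCombination_reesGens_of_dominatesSum {x : Fin (s + 1) → ℤ} {n p : ℕ}
    {a : Fin s → ℕ} (hn : x (Fin.last s) = n) (ha : ∀ i, x i.castSucc = a i) (hp : 0 < p)
    (h : DominatesSum v (n * p) (p • a)) : IsNonnegRealCombination (reesGens v) x := by
  obtain ⟨c, hcn, hca⟩ := h
  have hp' : (0 : ℝ) < p := by exact_mod_cast hp
  have hle : ∀ i, ∑ j, (c j : ℝ) / p * v j i ≤ a i := fun i => by
    have hi : ((∑ j, c j * v j i : ℕ) : ℝ) ≤ p * a i := by exact_mod_cast (by simpa using hca i)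
    calc ∑ j, (c j : ℝ) / p * v j i = (∑ j, c j * v j i : ℕ) / p := by
          push_cast
          simp only [sum_div, div_mul_eq_mul_div]
      _ ≤ a i := by rwa [div_le_iff₀' hp']
  refine ⟨Sum.elim (fun i => a i - ∑ j, (c j : ℝ) / p * v j i) (fun j => c j / p), ?_,
    fun k => ?_⟩
  · rintro (i | j)
    · simpa using hle i
    · simp only [Sum.elim_inr]
      positivity
  · induction k using Fin.lastCases with
    | last =>
      rw [sum_mul_reesGens_last, hn]
      have : ((∑ j, c j : ℕ) : ℝ) = n * p := by exact_mod_cast hcn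
      simp only [Sum.elim_inr, ← sum_div]
      push_cast at this ⊢
      field_simp
      linarith
    | cast i =>
      rw [sum_mul_reesGens_castSucc, ha]
      simp

end ReesGenerators

theorem normal_iff_hilbert_basis
    (K : Type*) [Field K] {s q : ℕ} (v : Fin q → Fin s → ℕ) :
    IsNormalIdeal (monIdeal K v) ↔
      ∀ x : Fin (s + 1) → ℤ,
        (∃ c : (Fin s ⊕ Fin q) → ℝ, (∀ j, 0 ≤ c j) ∧
            ∀ k, (x k : ℝ) = ∑ j, c j * (reesGens v j k : ℝ)) ↔
        (∃ c : (Fin s ⊕ Fin q) → ℕ, ∀ k, x k = ∑ j, (c j : ℤ) * reesGens v j k) := by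
  rw [isNormalIdeal_monIdeal_iff]
  change _ ↔ ∀ x, IsNonnegRealCombination (reesGens v) x ↔ IsNatCombination (reesGens v) x
  refine ⟨fun hnormal x => ⟨fun hx => ?_, IsNatCombination.isNonnegRealCombination⟩,
    fun hHB n p a _ hp hdom => ?_⟩
  · have hx0 := hx.nonneg (reesGens_nonneg v)
    obtain ⟨p, hp, hpx⟩ := hx.exists_pos_isNatCombination_nsmul
    set n := (x (Fin.last s)).toNat
    set a : Fin s → ℕ := fun i => (x i.castSucc).toNat
    have hn : x (Fin.last s) = n := (Int.toNat_of_nonneg (hx0 _)).symm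
    have ha : ∀ i, x i.castSucc = a i := fun i => (Int.toNat_of_nonneg (hx0 _)).symm
    rw [isNatCombination_reesGens_iff v (n := n * p) (a := p • a) (by simp [hn, mul_comm])
      (by simp [ha])] at hpx
    rw [isNatCombination_reesGens_iff v hn ha]
    rcases Nat.eq_zero_or_pos n with hn0 | hn0
    · exact ⟨0, by simp [hn0], by simp⟩
    · exact hnormal n p a hn0 hp hpx
  · have hx := isNonnegRealCombination_reesGens_of_dominatesSum v
      (x := Fin.snoc (fun i => (a i : ℤ)) n) (by simp) (by simp) hp hdom
    exact (isNatCombination_reesGens_iff v (by simp) (by simp)).mp ((hHB _).mp hx)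
end

section
/- Let $\mathcal{A}=\{e_1,\dots,e_s\}\cup\{v_1,\dots,v_q\}\subset\mathbb{N}^s$ where each $v_i$ has coordinate sum $2$. If $\alpha\in\mathbb{N}^s\setminus\{0\}$ and $\beta_1,\dots,\beta_k\in\mathcal{A}$ satisfy $\sum_{i=1}^k\beta_i\ge\alpha$ (componentwise), then there exist $\gamma_1,\dots,\gamma_\ell\in\mathcal{A}$ with $\alpha=\sum_{i=1}^\ell \gamma_i$ and $\ell\le k$. -/
/-!
Peel off one summand `b` of `β₁ + ⋯ + βₖ` at a time: `α - b` lies below the remaining `k - 1`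
summands, and `α = (α - (α - b)) + (α - b)` where the first part lies below `b`. Since every element
of `𝒜` has coordinate sum at most `2` and `𝒜` contains all unit vectors, anything below an element of
`𝒜` is `0`, a unit vector, or that element itself, so it costs at most one summand.
-/

theorem exists_fin_sum_eq_of_le_fin_sum {M : Type*} [AddCommMonoid M] [PartialOrder M]
    [CanonicallyOrderedAdd M] [Sub M] [OrderedSub M] {A : Set M} (hA : IsLowerSet (insert 0 A)) :
    ∀ {k : ℕ} (β : Fin k → M), (∀ i, β i ∈ A) → ∀ α, α ≤ ∑ i, β i →
      ∃ (l : ℕ) (γ : Fin l → M), l ≤ k ∧ (∀ i, γ i ∈ A) ∧ α = ∑ i, γ i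
  | 0, _, _, α, hα => ⟨0, Fin.elim0, le_rfl, Fin.rec0, by simpa using hα⟩
  | k + 1, β, hβ, α, hα => by
    rw [Fin.sum_univ_succ, ← tsub_le_iff_left] at hα
    obtain ⟨l, γ, hlk, hγ, hsum⟩ :=
      exists_fin_sum_eq_of_le_fin_sum hA (fun i => β i.succ) (fun i => hβ _) _ hα
    have hsplit : α = (α - (α - β 0)) + (α - β 0) := (tsub_add_cancel_of_le tsub_le_self).symm
    rcases hA tsub_tsub_le (Set.mem_insert_of_mem 0 (hβ 0)) with hzero | hmem
    · exact ⟨l, γ, by omega, hγ, by rw [hsplit, hzero, zero_add, hsum]⟩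
    · refine ⟨l + 1, Fin.cons _ γ, by omega, Fin.cases hmem hγ, ?_⟩
      rw [Fin.sum_cons, ← hsum, ← hsplit]

theorem exists_eq_pi_single_of_sum_eq_one {ι : Type*} [Fintype ι] [DecidableEq ι] (c : ι → ℕ)
    (hc : ∑ i, c i = 1) : ∃ j, c = Pi.single j 1 := by
  obtain ⟨j, hj⟩ := (Finsupp.sum_eq_one_iff (Finsupp.equivFunOnFinite.symm c)).mp
    (by rwa [Finsupp.sum_fintype _ _ fun _ => rfl])
  exact ⟨j, by rw [← Finsupp.single_eq_pi_single, ← hj, Finsupp.coe_equivFunOnFinite_symm]⟩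

theorem isLowerSet_insert_zero_of_sum_le_two {ι : Type*} [Fintype ι] [DecidableEq ι]
    {A : Set (ι → ℕ)} (hunit : ∀ j, Pi.single j 1 ∈ A) (hA : ∀ b ∈ A, ∑ i, b i ≤ 2) :
    IsLowerSet (insert 0 A) := by
  intro b c hcb hb
  have hb2 : ∑ i, b i ≤ 2 := by
    rcases hb with rfl | hb
    · simp
    · exact hA b hb
  have hcb_sum : ∑ i, c i ≤ ∑ i, b i := Finset.sum_le_sum fun i _ => hcb i
  rcases hcb_sum.eq_or_lt with heq | hlt
  · rwa [funext fun i => (Finset.sum_eq_sum_iff_of_le fun i _ => hcb i).mp heq i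
      (Finset.mem_univ i)]
  · obtain h0 | h1 : ∑ i, c i = 0 ∨ ∑ i, c i = 1 := by omega
    · left
      simpa [Finset.sum_eq_zero_iff, funext_iff] using h0
    · obtain ⟨j, rfl⟩ := exists_eq_pi_single_of_sum_eq_one c h1
      exact Set.mem_insert_of_mem 0 (hunit j)

theorem decompose_below_sum_general
    {s q : ℕ} (v : Fin q → Fin s → ℕ) (hdeg : ∀ i, (∑ k, v i k) = 2)
    (A : Set (Fin s → ℕ))
    (hA : A = (Set.range fun i : Fin s => (Pi.single i 1 : Fin s → ℕ)) ∪ Set.range v)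
    (α : Fin s → ℕ)
    (k : ℕ) (β : Fin k → (Fin s → ℕ)) (hβ : ∀ i, β i ∈ A)
    (hge : ∀ j : Fin s, α j ≤ ∑ i, β i j) :
    ∃ (l : ℕ) (γ : Fin l → (Fin s → ℕ)),
      l ≤ k ∧ (∀ i, γ i ∈ A) ∧ ∀ j : Fin s, α j = ∑ i, γ i j := by
  have hlower : IsLowerSet (insert 0 A) := by
    subst hA
    refine isLowerSet_insert_zero_of_sum_le_two (fun j => Or.inl ⟨j, rfl⟩) ?_
    rintro b (⟨j, rfl⟩ | ⟨i, rfl⟩)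
    · simp
    · exact (hdeg i).le
  obtain ⟨l, γ, hlk, hγ, hsum⟩ := exists_fin_sum_eq_of_le_fin_sum hlower β hβ α
    fun j => (hge j).trans_eq (Finset.sum_apply j _ β).symm
  exact ⟨l, γ, hlk, hγ, fun j => by rw [hsum, Finset.sum_apply]⟩

theorem decompose_below_sum
    {s q : ℕ} (v : Fin q → Fin s → ℕ) (hdeg : ∀ i, (∑ k, v i k) = 2)
    (A : Set (Fin s → ℕ))
    (hA : A = (Set.range fun i : Fin s => (Pi.single i 1 : Fin s → ℕ)) ∪ Set.range v)
    (α : Fin s → ℕ) (hα : α ≠ 0)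
    (k : ℕ) (β : Fin k → (Fin s → ℕ)) (hβ : ∀ i, β i ∈ A)
    (hge : ∀ j : Fin s, α j ≤ ∑ i, β i j) :
    ∃ (l : ℕ) (γ : Fin l → (Fin s → ℕ)),
      l ≤ k ∧ (∀ i, γ i ∈ A) ∧ ∀ j : Fin s, α j = ∑ i, γ i j :=
  decompose_below_sum_general v hdeg A hA α k β hβ hge
end

section
/- Let $\mathcal{A}=\{e_1,\dots,e_s\}\cup\{v_1,\dots,v_q\}\subset\mathbb{N}^s$ where each $v_i$ has coordinate sum $2$. If $a\in\mathbb{Q}_+^s$, $b$ is a rational point of the convex hull $\mathrm{conv}(\{0\}\cup\mathcal{A})$, and $a\le b$ componentwise, then $a\in\mathrm{conv}(\{0\}\cup\mathcal{A})$. -/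
open Function

-- zeroing one coordinate of a generator gives a generator
lemma gen_zero {s q : ℕ} (v : Fin q → Fin s → ℕ) (hdeg : ∀ i, (∑ k, v i k) = 2)
    (A : Set (Fin s → ℝ))
    (hA : A = (Set.range fun i : Fin s => (Pi.single i 1 : Fin s → ℝ)) ∪
        (Set.range fun i : Fin q => fun k => ((v i k : ℕ) : ℝ)))
    (k : Fin s) {w : Fin s → ℝ} (hw : w ∈ ({0} ∪ A : Set (Fin s → ℝ))) :
    (fun m => if m = k then 0 else w m) ∈ ({0} ∪ A : Set (Fin s → ℝ)) := by
  subst hA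
  rcases hw with hw | hw | hw
  · left
    simp only [Set.mem_singleton_iff] at hw
    subst hw
    funext m; simp
  · obtain ⟨i, rfl⟩ := hw
    by_cases hik : i = k
    · subst hik
      left
      funext m
      by_cases h : m = i <;> simp [h, Pi.single_apply]
    · right; left
      exact ⟨i, by funext m; by_cases h : m = k <;> simp [h, Pi.single_apply, Ne.symm, hik]⟩
  · obtain ⟨i, rfl⟩ := hw
    rcases Nat.lt_or_ge (v i k) 1 with h0 | h1
    · -- v i k = 0 : unchanged
      interval_cases h : v i k
      right; right
      exact ⟨i, by funext m; by_cases hm : m = k <;> simp [hm, h]⟩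
    · rcases Nat.lt_or_ge (v i k) 2 with h1' | h2
      · -- v i k = 1 : there's a unique other coordinate with value 1
        have hvk : v i k = 1 := le_antisymm (Nat.lt_succ_iff.mp h1') h1
        have hsum : ∑ m ∈ Finset.univ.erase k, v i m = 1 := by
          have := hdeg i
          rw [← Finset.add_sum_erase _ _ (Finset.mem_univ k), hvk] at this
          omega
        have hex : ∃ m ∈ Finset.univ.erase k, 1 ≤ v i m := by
          by_contra hc
          push_neg at hc
          have : ∑ m ∈ Finset.univ.erase k, v i m = 0 :=
            Finset.sum_eq_zero fun m hm => by have := hc m hm; omega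
          omega
        obtain ⟨m, hm, hm1⟩ := hex
        have hmk : m ≠ k := (Finset.mem_erase.mp hm).1
        have hvm : v i m = 1 := by
          have h3 : v i m ≤ ∑ n ∈ Finset.univ.erase k, v i n :=
            Finset.single_le_sum (fun n _ => Nat.zero_le _) hm
          omega
        have hrest : ∀ n, n ≠ k → n ≠ m → v i n = 0 := by
          intro n hnk hnm
          have hn : n ∈ Finset.univ.erase k := Finset.mem_erase.mpr ⟨hnk, Finset.mem_univ n⟩
          have hsub : {m, n} ⊆ Finset.univ.erase k := by
            intro x hx
            simp only [Finset.mem_insert, Finset.mem_singleton] at hx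
            rcases hx with rfl | rfl <;> [exact hm; exact hn]
          have h4 : ∑ x ∈ ({m, n} : Finset (Fin s)), v i x ≤ ∑ x ∈ Finset.univ.erase k, v i x :=
            Finset.sum_le_sum_of_subset hsub
          rw [Finset.sum_pair (Ne.symm hnm)] at h4
          omega
        right; left
        refine ⟨m, ?_⟩
        funext n
        by_cases hn : n = k
        · subst hn; simp [hmk, Pi.single_apply, Ne.symm hmk]
        · by_cases hnm : n = m
          · subst hnm; simp [hn, hvm, Pi.single_apply]
          · simp [hn, hrest n hn hnm, Pi.single_apply, hnm]
      · -- v i k = 2 : everything else is 0, result is 0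
        have hvk : v i k = 2 := by
          have := hdeg i
          have h3 : v i k ≤ ∑ n, v i n :=
            Finset.single_le_sum (fun n _ => Nat.zero_le _) (Finset.mem_univ k)
          omega
        have hrest : ∀ n, n ≠ k → v i n = 0 := by
          intro n hnk
          have := hdeg i
          have hsub : ({k, n} : Finset (Fin s)) ⊆ Finset.univ := Finset.subset_univ _
          have h2 : ∑ x ∈ ({k, n} : Finset (Fin s)), v i x ≤ ∑ x, v i x :=
            Finset.sum_le_sum_of_subset hsub
          rw [Finset.sum_pair (Ne.symm hnk)] at h2
          omega
        left
        funext n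
        by_cases hn : n = k <;> simp [hn, hrest]

theorem mem_convexHull_of_le
    {s q : ℕ} (v : Fin q → Fin s → ℕ) (hdeg : ∀ i, (∑ k, v i k) = 2)
    (A : Set (Fin s → ℝ))
    (hA : A = (Set.range fun i : Fin s => (Pi.single i 1 : Fin s → ℝ)) ∪
        (Set.range fun i : Fin q => fun k => ((v i k : ℕ) : ℝ)))
    (a b : Fin s → ℚ)
    (ha : ∀ k, 0 ≤ a k)
    (hb : (fun k => ((b k : ℚ) : ℝ)) ∈ convexHull ℝ ({0} ∪ A))
    (hab : ∀ k, a k ≤ b k) :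
    (fun k => ((a k : ℚ) : ℝ)) ∈ convexHull ℝ ({0} ∪ A) := by
  set C : Set (Fin s → ℝ) := convexHull ℝ ({0} ∪ A) with hC
  -- Lemma 1: zeroing a coordinate preserves C
  have zero_mem : ∀ (k : Fin s) (x : Fin s → ℝ), x ∈ C →
      (fun m => if m = k then 0 else x m) ∈ C := by
    intro k x hx
    let L : (Fin s → ℝ) →ₗ[ℝ] (Fin s → ℝ) :=
      LinearMap.pi (fun m => if m = k then 0 else LinearMap.proj m)
    have hLx : L x = fun m => if m = k then 0 else x m := by
      funext m
      simp only [L, LinearMap.pi_apply]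
      split <;> simp
    have h1 : L x ∈ L '' C := Set.mem_image_of_mem _ hx
    rw [hC, LinearMap.image_convexHull] at h1
    have h2 : L '' ({0} ∪ A) ⊆ ({0} ∪ A) := by
      rintro _ ⟨w, hw, rfl⟩
      have hLw : L w = fun m => if m = k then 0 else w m := by
        funext m
        simp only [L, LinearMap.pi_apply]
        split <;> simp
      rw [hLw]
      exact gen_zero v hdeg A hA k hw
    have := convexHull_mono h2 h1
    rwa [hLx] at this
  -- Lemma 2: decreasing one coordinate preserves C
  have dec_mem : ∀ (k : Fin s) (x : Fin s → ℝ) (c : ℝ), x ∈ C → 0 ≤ c → c ≤ x k →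
      Function.update x k c ∈ C := by
    intro k x c hx hc hcx
    have hxk : 0 ≤ x k := le_trans hc hcx
    have h0 : (fun m => if m = k then 0 else x m) ∈ C := zero_mem k x hx
    rcases eq_or_lt_of_le hxk with heq | hpos
    · have hc0 : c = 0 := le_antisymm (by rw [← heq] at hcx; exact hcx) hc
      subst hc0
      have : Function.update x k 0 = fun m => if m = k then 0 else x m := by
        funext m; by_cases h : m = k <;> simp [h, Function.update_apply]
      rw [this]; exact h0
    · set t : ℝ := c / x k with ht
      have ht0 : 0 ≤ t := div_nonneg hc (le_of_lt hpos)
      have ht1 : t ≤ 1 := (div_le_one hpos).mpr hcx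
      have key : Function.update x k c = t • x + (1 - t) • (fun m => if m = k then 0 else x m) := by
        funext m
        by_cases h : m = k
        · subst h
          simp [Function.update_apply, ht, div_mul_cancel₀ c (ne_of_gt hpos)]
        · simp [Function.update_apply, h]
          ring
      rw [key]
      exact (convex_convexHull ℝ _) hx h0 ht0 (by linarith) (by ring)
  -- Induction over coordinates
  have main : ∀ S : Finset (Fin s),
      (fun k => if k ∈ S then ((a k : ℚ) : ℝ) else ((b k : ℚ) : ℝ)) ∈ C := by
    intro S
    induction S using Finset.induction_on with
    | empty => simpa using hb
    | @insert k S hkS ih =>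
      have habk : ((a k : ℚ) : ℝ) ≤ ((b k : ℚ) : ℝ) := by exact_mod_cast hab k
      have hak : (0:ℝ) ≤ ((a k : ℚ) : ℝ) := by exact_mod_cast ha k
      have hbk : (fun m => if m ∈ S then ((a m : ℚ) : ℝ) else ((b m : ℚ) : ℝ)) k
          = ((b k : ℚ) : ℝ) := by simp [hkS]
      have key : (fun m => if m ∈ insert k S then ((a m : ℚ) : ℝ) else ((b m : ℚ) : ℝ))
          = Function.update (fun m => if m ∈ S then ((a m : ℚ) : ℝ) else ((b m : ℚ) : ℝ))
            k ((a k : ℚ) : ℝ) := by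
        funext m
        by_cases hm : m = k
        · subst hm; simp [Function.update_apply]
        · simp [Function.update_apply, hm, Finset.mem_insert]
      rw [key]
      exact dec_mem k _ _ ih hak (by simpa [hkS] using habk)
  have := main Finset.univ
  simpa using this
end

section
/- Let $v$ be a non-isolated vertex of a finite simple graph $G$ such that the neighbor set $N_G(v)$ is a minimal vertex cover of $G$. Then a subset $C\subseteq V(G)$ is a minimal vertex cover of $G$ if and only if either $C=N_G(v)$, or $C=\{v\}\cup D$ where $D$ is a minimal vertex cover of $G\setminus v$ with $N_G(v)\not\subseteq D$. -/
/-!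
A minimal vertex cover `C` either avoids `v`, and then contains `N(v)`, so equals the minimal
cover `N(v)`; or contains `v`, and then `C \ {v}` is a minimal cover of `G \ v`, which cannot
contain `N(v)` because then `v` could be dropped from `C`. Conversely, a cover inside `{v} ∪ D`
must contain `v` (otherwise it contains `N(v)`, which lies outside `D`), and minimality of `D`
finishes the argument.
-/

/-- `C` is a vertex cover of `G`: every edge meets `C`. -/
def IsVertexCover {V : Type*} (G : SimpleGraph V) (C : Set V) : Prop :=
  ∀ u w, G.Adj u w → u ∈ C ∨ w ∈ C

/-- `C` is a minimal vertex cover of `G`. -/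
def IsMinVertexCover {V : Type*} (G : SimpleGraph V) (C : Set V) : Prop :=
  IsVertexCover G C ∧ ∀ D : Set V, D ⊆ C → IsVertexCover G D → D = C

/-- The graph obtained from `G` by deleting the vertex `v` (and all edges through it). -/
def deleteVertex {V : Type*} (G : SimpleGraph V) (v : V) : SimpleGraph V where
  Adj u w := G.Adj u w ∧ u ≠ v ∧ w ≠ v
  symm := by
    constructor
    intro u w h
    exact ⟨h.1.symm, h.2.2, h.2.1⟩
  loopless := by
    constructor
    intro u h
    exact h.1.ne rfl

section

variable {V : Type*} {G : SimpleGraph V} {v : V} {C D : Set V}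

theorem isVertexCover_deleteVertex_iff :
    IsVertexCover (deleteVertex G v) D ↔ IsVertexCover G (insert v D) := by
  constructor
  · intro hD u w huw
    rcases eq_or_ne u v with rfl | hu
    · exact .inl (Set.mem_insert u D)
    rcases eq_or_ne w v with rfl | hw
    · exact .inr (Set.mem_insert w D)
    exact (hD u w ⟨huw, hu, hw⟩).imp (Set.mem_insert_of_mem v) (Set.mem_insert_of_mem v)
  · intro hD u w ⟨huw, hu, hw⟩
    exact (hD u w huw).imp (Set.mem_of_mem_insert_of_ne · hu) (Set.mem_of_mem_insert_of_ne · hw)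

theorem IsVertexCover.neighborSet_subset (hC : IsVertexCover G C) (hv : v ∉ C) :
    G.neighborSet v ⊆ C :=
  fun w hw => (hC v w hw).resolve_left hv

theorem IsVertexCover.diff_singleton (hC : IsVertexCover G C) (hN : G.neighborSet v ⊆ C) :
    IsVertexCover G (C \ {v}) := by
  intro u w huw
  rcases eq_or_ne u v with rfl | hu
  · exact .inr ⟨hN huw, huw.ne.symm⟩
  rcases eq_or_ne w v with rfl | hw
  · exact .inl ⟨hN huw.symm, huw.ne⟩
  exact (hC u w huw).imp (⟨·, hu⟩) (⟨·, hw⟩)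

theorem IsMinVertexCover.eq_neighborSet (hC : IsMinVertexCover G C) (hv : v ∉ C)
    (hN : IsVertexCover G (G.neighborSet v)) : C = G.neighborSet v :=
  (hC.2 _ (hC.1.neighborSet_subset hv) hN).symm

theorem IsMinVertexCover.not_neighborSet_subset (hC : IsMinVertexCover G C) (hv : v ∈ C) :
    ¬ G.neighborSet v ⊆ C := by
  intro hN
  have hdiff : C \ {v} = C := hC.2 _ Set.sdiff_subset (hC.1.diff_singleton hN)
  exact (hdiff.symm ▸ hv : v ∈ C \ {v}).2 rfl

theorem IsMinVertexCover.diff_singleton_deleteVertex (hC : IsMinVertexCover G C) (hv : v ∈ C) :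
    IsMinVertexCover (deleteVertex G v) (C \ {v}) := by
  refine ⟨isVertexCover_deleteVertex_iff.mpr ?_, ?_⟩
  · rw [Set.insert_sdiff_self_of_mem hv]
    exact hC.1
  intro E hE hEcov
  have hvE : v ∉ E := fun h => (hE h).2 rfl
  have hinsert : insert v E = C :=
    hC.2 _ (Set.insert_subset hv (hE.trans Set.sdiff_subset))
      (isVertexCover_deleteVertex_iff.mp hEcov)
  rw [← hinsert, Set.insert_sdiff_self_of_notMem hvE]

theorem IsMinVertexCover.insert_of_deleteVertex (hD : IsMinVertexCover (deleteVertex G v) D)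
    (hND : ¬ G.neighborSet v ⊆ D) : IsMinVertexCover G (insert v D) := by
  refine ⟨isVertexCover_deleteVertex_iff.mp hD.1, ?_⟩
  intro E hE hEcov
  have hvE : v ∈ E := by
    by_contra hvE
    refine hND fun w hw => ?_
    exact Set.mem_of_mem_insert_of_ne (hE (hEcov.neighborSet_subset hvE hw)) (G.ne_of_adj hw).symm
  have hdiff : E \ {v} = D :=
    hD.2 _ (fun x hx => Set.mem_of_mem_insert_of_ne (hE hx.1) hx.2)
      (isVertexCover_deleteVertex_iff.mpr (by rwa [Set.insert_sdiff_self_of_mem hvE]))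
  rw [← hdiff, Set.insert_sdiff_self_of_mem hvE]

end

theorem minVertexCover_characterization_general
    {V : Type*} (G : SimpleGraph V) (v : V)
    (hN : IsMinVertexCover G (G.neighborSet v)) :
    ∀ C : Set V, IsMinVertexCover G C ↔
      (C = G.neighborSet v ∨
        ∃ D : Set V, IsMinVertexCover (deleteVertex G v) D ∧
          ¬ G.neighborSet v ⊆ D ∧ C = insert v D) := by
  intro C
  constructor
  · intro hC
    by_cases hv : v ∈ C
    · refine .inr ⟨C \ {v}, hC.diff_singleton_deleteVertex hv, ?_,
        (Set.insert_sdiff_self_of_mem hv).symm⟩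
      exact fun hsub => hC.not_neighborSet_subset hv (hsub.trans Set.sdiff_subset)
    · exact .inl (hC.eq_neighborSet hv hN.1)
  · rintro (rfl | ⟨D, hD, hND, rfl⟩)
    · exact hN
    · exact hD.insert_of_deleteVertex hND

theorem minVertexCover_characterization
    {V : Type*} [Fintype V] (G : SimpleGraph V) (v : V)
    (hniso : ∃ w, G.Adj v w)
    (hN : IsMinVertexCover G (G.neighborSet v)) :
    ∀ C : Set V, IsMinVertexCover G C ↔
      (C = G.neighborSet v ∨
        ∃ D : Set V, IsMinVertexCover (deleteVertex G v) D ∧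
          ¬ G.neighborSet v ⊆ D ∧ C = insert v D) :=
  minVertexCover_characterization_general G v hN
end

section
/- Let $G$ be a finite simple graph with vertex set $\{t_1,\dots,t_s\}$, let $I=I(G)$ be its edge ideal, and let $C_1,C_2$ be two vertex-disjoint odd cycles of $G$ such that some edge $e\in E(G)$ intersects both $C_1$ and $C_2$. Then the monomial $\prod_{t_i\in C_1\cup C_2} t_i$ lies in $I^{(|C_1|+|C_2|)/2}$. -/
open MvPolynomial

/-- The edge ideal of a graph: generated by the monomials `X u * X w` over edges. -/
noncomputable def edgeIdeal (K : Type*) [Field K] {V : Type*} (G : SimpleGraph V) :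
    Ideal (MvPolynomial V K) :=
  Ideal.span {m | ∃ u w, G.Adj u w ∧ m = X u * X w}

/-!
Each odd cycle `C` through a vertex `a` splits as `a` followed by a path with an even number
of edges; pairing consecutive vertices of that path shows
`∏_{t ∈ C} t ∈ t_a · I ^ ((|C| - 1) / 2)`. Doing this for both cycles at the endpoints
`a ∈ C₁`, `b ∈ C₂` of the connecting edge, the leftover factor `t_a t_b` is one more
generator of `I`.
-/

namespace SimpleGraph

variable {K : Type*} [Field K] {V : Type*} {G : SimpleGraph V}

theorem X_mul_X_mem_edgeIdeal {a b : V} (h : G.Adj a b) :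
    (X a * X b : MvPolynomial V K) ∈ edgeIdeal K G :=
  Ideal.subset_span ⟨a, b, h, rfl⟩

namespace Walk

theorem exists_prod_support_eq_mul_X :
    ∀ {n : ℕ} {x y : V} (p : G.Walk x y), p.length = 2 * n →
      ∃ m ∈ edgeIdeal K G ^ n, (p.support.map X).prod = m * X y
  | 0, _, _, .nil, _ => ⟨1, by simp, by simp⟩
  | n + 1, x, _, .cons (v := x₁) h (.cons h' r), hl => by
    obtain ⟨m, hm, hprod⟩ := exists_prod_support_eq_mul_X (n := n) r (by simp only [length_cons] at hl; omega)
    refine ⟨m * (X x * X x₁), ?_, ?_⟩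
    · rw [pow_succ]
      exact Ideal.mul_mem_mul hm (X_mul_X_mem_edgeIdeal h)
    · simp only [support_cons, List.map_cons, List.prod_cons, hprod]
      ring
  | 0, _, _, .cons _ _, hl | _ + 1, _, _, .nil, hl | _ + 1, _, _, .cons _ .nil, hl => by
    simp only [length_nil, length_cons] at hl; omega

theorem exists_prod_tail_support_eq_X_mul {v : V} {k : ℕ} (c : G.Walk v v)
    (hc : c.length = 2 * k + 1) :
    ∃ m ∈ edgeIdeal K G ^ k,
      (c.support.tail.map (X : V → MvPolynomial V K)).prod = X v * m := by
  cases c with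
  | nil => simp at hc
  | cons _ q =>
    obtain ⟨m, hm, hprod⟩ := q.exists_prod_support_eq_mul_X (K := K) (by simpa using hc)
    exact ⟨m, hm, by rw [support_cons, List.tail_cons, hprod, mul_comm]⟩

theorem IsCycle.exists_prod_support_eq_X_mul [DecidableEq V] {v a : V} {c : G.Walk v v}
    (hc : c.IsCycle) {k : ℕ} (hk : c.length = 2 * k + 1) (ha : a ∈ c.support) :
    ∃ m ∈ edgeIdeal K G ^ k, ∏ i ∈ c.support.toFinset, X i = X a * m := by
  have htail : c.support.toFinset = c.support.tail.toFinset := by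
    rw [← c.cons_tail_support, List.toFinset_cons, List.tail_cons,
      Finset.insert_eq_of_mem (List.mem_toFinset.2 (end_mem_tail_support hc.not_nil))]
  have hrot : (c.support.tail.map (X : V → MvPolynomial V K)).prod =
      ((c.rotate a ha).support.tail.map X).prod :=
    (((c.support_rotate a ha).perm.map X).prod_eq).symm
  rw [htail, List.prod_toFinset _ hc.support_nodup, hrot]
  exact (c.rotate a ha).exists_prod_tail_support_eq_X_mul (by rwa [length_rotate])

end Walk

end SimpleGraph

theorem disjoint_odd_cycles_joined_by_edge
    (K : Type*) [Field K] {V : Type*} [DecidableEq V]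
    (G : SimpleGraph V) {u w : V}
    (c₁ : G.Walk u u) (c₂ : G.Walk w w)
    (h₁ : c₁.IsCycle) (h₂ : c₂.IsCycle)
    (ho₁ : Odd c₁.length) (ho₂ : Odd c₂.length)
    (hdisj : ∀ x, x ∈ c₁.support → x ∉ c₂.support)
    (hedge : ∃ a b, G.Adj a b ∧ a ∈ c₁.support ∧ b ∈ c₂.support) :
    (∏ i ∈ c₁.support.toFinset ∪ c₂.support.toFinset, X i) ∈
      (edgeIdeal K G) ^ ((c₁.length + c₂.length) / 2) := by
  obtain ⟨a, b, hab, ha, hb⟩ := hedge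
  obtain ⟨k₁, hk₁⟩ := ho₁
  obtain ⟨k₂, hk₂⟩ := ho₂
  obtain ⟨m₁, hm₁, e₁⟩ := h₁.exists_prod_support_eq_X_mul (K := K) hk₁ ha
  obtain ⟨m₂, hm₂, e₂⟩ := h₂.exists_prod_support_eq_X_mul (K := K) hk₂ hb
  have hdisj' : Disjoint c₁.support.toFinset c₂.support.toFinset :=
    Finset.disjoint_left.2 fun x hx hx' ↦
      hdisj x (List.mem_toFinset.1 hx) (List.mem_toFinset.1 hx')
  have hmem : m₁ * m₂ * (X a * X b) ∈ edgeIdeal K G ^ (k₁ + k₂ + 1) := by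
    rw [pow_succ, pow_add]
    exact Ideal.mul_mem_mul (Ideal.mul_mem_mul hm₁ hm₂) (SimpleGraph.X_mul_X_mem_edgeIdeal hab)
  rw [Finset.prod_union hdisj', e₁, e₂,
    show (c₁.length + c₂.length) / 2 = k₁ + k₂ + 1 by omega]
  convert hmem using 1
  ring
end

section
/- Let $G$ be a finite simple graph and let $C_1,C_2$ be a Hochster configuration of $G$: two induced odd cycles with $C_1\cap N_G(C_2)=\emptyset$. Then the monomial $\prod_{t_i\in C_1\cup C_2} t_i$ does not lie in $I(G)^{(|C_1|+|C_2|)/2}$. -/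
open MvPolynomial

/-!
Put `S = C₁ ∪ C₂` and `n = (|C₁| + |C₂|) / 2`, so that `x_S = ∏_{i ∈ S} t_i` is squarefree of
degree `2n`. The ideal `I(G)^n` is spanned by the products of `n` edge monomials, each of degree
`2n`, so if `x_S ∈ I(G)^n` then one such product divides `x_S` and hence equals it: `n` edges
cover every vertex of `S` exactly once. As no edge joins `C₁` to the rest of `S`, the edges
meeting `C₁` would cover the odd number of vertices of `C₁` in pairs.
-/

open Finsupp Pointwise

theorem Finsupp.eq_of_le_of_degree_le {σ : Type*} {d e : σ →₀ ℕ} (hle : d ≤ e)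
    (hdeg : degree e ≤ degree d) : d = e := by
  obtain ⟨f, rfl⟩ := exists_add_of_le hle
  rw [map_add] at hdeg
  rw [(degree_eq_zero_iff f).1 (by omega), add_zero]

theorem MvPolynomial.span_monomial_image_pow {σ R : Type*} [CommSemiring R]
    (s : Set (σ →₀ ℕ)) (n : ℕ) :
    Ideal.span ((fun d => monomial d (1 : R)) '' s) ^ n =
      Ideal.span ((fun d => monomial d (1 : R)) '' (n • s)) := by
  induction n with
  | zero => simp
  | succ n ih =>
    rw [pow_succ, ih, Ideal.span_mul_span', succ_nsmul]
    congr 1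
    exact (Set.image_image2_distrib fun a b => by rw [monomial_mul, one_mul]).symm

theorem SimpleGraph.Walk.IsCycle.card_support_toFinset {V : Type*} [DecidableEq V]
    {G : SimpleGraph V} {u : V} {c : G.Walk u u} (hc : c.IsCycle) :
    c.support.toFinset.card = c.length := by
  rw [← c.cons_tail_support, List.toFinset_cons,
    Finset.insert_eq_of_mem (List.mem_toFinset.2 (c.end_mem_tail_support hc.not_nil)),
    List.toFinset_card_of_nodup hc.support_nodup, List.length_tail, c.length_support,
    Nat.add_sub_cancel]

namespace SimpleGraph

variable {V : Type*} {G : SimpleGraph V} {K : Type*} [Field K]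

def edgeExponents (G : SimpleGraph V) : Set (V →₀ ℕ) :=
  {d | ∃ u w, G.Adj u w ∧ d = single u 1 + single w 1}

theorem degree_eq_of_mem_nsmul_edgeExponents {n : ℕ} {d : V →₀ ℕ}
    (hd : d ∈ n • G.edgeExponents) : d.degree = 2 * n := by
  induction n generalizing d with
  | zero => simp_all
  | succ n ih =>
    rw [succ_nsmul] at hd
    obtain ⟨a, ha, _, ⟨u, w, -, rfl⟩, rfl⟩ := hd
    rw [map_add, map_add, ih ha, degree_single, degree_single]
    ring

theorem even_sum_of_mem_nsmul_edgeExponents {n : ℕ} {d : V →₀ ℕ}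
    (hd : d ∈ n • G.edgeExponents) {A : Finset V}
    (hA : ∀ u w, G.Adj u w → u ∈ A → w ∈ d.support → w ∈ A) :
    Even (∑ i ∈ A, d i) := by
  induction n generalizing d with
  | zero => simp_all
  | succ n ih =>
    rw [succ_nsmul] at hd
    obtain ⟨a, ha, _, ⟨u, w, huw, rfl⟩, rfl⟩ := hd
    have hu : u ∈ (a + (single u 1 + single w 1)).support := by simp
    have hw : w ∈ (a + (single u 1 + single w 1)).support := by simp
    have hiff : u ∈ A ↔ w ∈ A := ⟨fun h => hA u w huw h hw, fun h => hA w u huw.symm h hu⟩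
    have ha : Even (∑ i ∈ A, a i) :=
      ih ha fun x y hxy hx hy => hA x y hxy hx (Finsupp.support_mono le_self_add hy)
    classical
    have hedge : ∑ i ∈ A, (single u 1 + single w 1 : V →₀ ℕ) i = if u ∈ A then 2 else 0 := by
      simp only [Finsupp.add_apply, Finset.sum_add_distrib, single_apply, Finset.sum_ite_eq,
        ← hiff]
      split_ifs <;> rfl
    simp only [Finsupp.add_apply, Finset.sum_add_distrib] at hedge ⊢
    rw [hedge]
    split_ifs
    exacts [ha.add even_two, ha]

theorem edgeIdeal_pow_eq_span_monomial (n : ℕ) : edgeIdeal K G ^ n =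
    Ideal.span ((fun d => monomial d (1 : K)) '' (n • G.edgeExponents)) := by
  rw [← span_monomial_image_pow, edgeIdeal]
  congr 2
  ext m
  simp only [edgeExponents, X, monomial_mul, mul_one, Set.mem_ofPred_eq, Set.mem_image]
  constructor
  · rintro ⟨u, w, huw, rfl⟩
    exact ⟨_, ⟨u, w, huw, rfl⟩, rfl⟩
  · rintro ⟨_, ⟨u, w, huw, rfl⟩, rfl⟩
    exact ⟨u, w, huw, rfl⟩

theorem prod_X_notMem_edgeIdeal_pow {S A : Finset V} {n : ℕ} (hAS : A ⊆ S) (hA : Odd A.card)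
    (hsep : ∀ u w, G.Adj u w → u ∈ A → w ∈ S → w ∈ A) (hn : S.card ≤ 2 * n) :
    ∏ i ∈ S, (X i : MvPolynomial V K) ∉ edgeIdeal K G ^ n := by
  classical
  set e : V →₀ ℕ := ∑ i ∈ S, single i 1
  have he : ∀ i, e i = if i ∈ S then 1 else 0 := by
    simp [e, Finsupp.finsetSum_apply, single_apply]
  rw [show ∏ i ∈ S, (X i : MvPolynomial V K) = monomial e 1 from (monomial_sum_one _ _).symm,
    edgeIdeal_pow_eq_span_monomial, mem_ideal_span_monomial_image]
  intro h
  obtain ⟨d, hd, hde⟩ := h e (by simp [support_monomial])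
  have hdeg : e.degree ≤ d.degree := by
    simpa [e, degree_eq_of_mem_nsmul_edgeExponents hd] using hn
  obtain rfl := eq_of_le_of_degree_le hde hdeg
  have heven := even_sum_of_mem_nsmul_edgeExponents hd (A := A) fun u w huw hu hw =>
    hsep u w huw hu (by by_contra hwS; simp [he, hwS] at hw)
  rw [Finset.sum_congr rfl fun i hi => (he i).trans (if_pos (hAS hi)), Finset.sum_const,
    smul_eq_mul, mul_one] at heven
  exact Nat.not_even_iff_odd.2 hA heven

end SimpleGraph

theorem hochster_configuration_not_mem_general
    (K : Type*) [Field K] {V : Type*} [DecidableEq V]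
    (G : SimpleGraph V) {u w : V}
    (c₁ : G.Walk u u) (c₂ : G.Walk w w)
    (h₁ : c₁.IsCycle) (h₂ : c₂.IsCycle)
    (ho₁ : Odd c₁.length) (ho₂ : Odd c₂.length)
    (hnadj : ∀ a b, a ∈ c₁.support → b ∈ c₂.support → ¬ G.Adj a b) :
    (∏ i ∈ c₁.support.toFinset ∪ c₂.support.toFinset, X i) ∉
      (edgeIdeal K G) ^ ((c₁.length + c₂.length) / 2) := by
  refine G.prod_X_notMem_edgeIdeal_pow Finset.subset_union_left
    (h₁.card_support_toFinset ▸ ho₁) (fun a b hab ha hb => ?_) ?_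
  · rcases Finset.mem_union.1 hb with hb | hb
    · exact hb
    · exact absurd hab (hnadj a b (List.mem_toFinset.1 ha) (List.mem_toFinset.1 hb))
  · calc _ ≤ c₁.support.toFinset.card + c₂.support.toFinset.card := Finset.card_union_le _ _
      _ = c₁.length + c₂.length := by rw [h₁.card_support_toFinset, h₂.card_support_toFinset]
      _ = 2 * ((c₁.length + c₂.length) / 2) :=
        (Nat.two_mul_div_two_of_even (ho₁.add_odd ho₂)).symm

theorem hochster_configuration_not_mem
    (K : Type*) [Field K] {V : Type*} [DecidableEq V]
    (G : SimpleGraph V) {u w : V}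
    (c₁ : G.Walk u u) (c₂ : G.Walk w w)
    (h₁ : c₁.IsCycle) (h₂ : c₂.IsCycle)
    (ho₁ : Odd c₁.length) (ho₂ : Odd c₂.length)
    (hind₁ : ∀ a b, a ∈ c₁.support → b ∈ c₁.support → G.Adj a b → s(a, b) ∈ c₁.edges)
    (hind₂ : ∀ a b, a ∈ c₂.support → b ∈ c₂.support → G.Adj a b → s(a, b) ∈ c₂.edges)
    (hdisj : ∀ x, x ∈ c₁.support → x ∉ c₂.support)
    (hnadj : ∀ a b, a ∈ c₁.support → b ∈ c₂.support → ¬ G.Adj a b) :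
    (∏ i ∈ c₁.support.toFinset ∪ c₂.support.toFinset, X i) ∉
      (edgeIdeal K G) ^ ((c₁.length + c₂.length) / 2) :=
  hochster_configuration_not_mem_general K G c₁ c₂ h₁ h₂ ho₁ ho₂ hnadj
end
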